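/- Let d ≥ 2 be an integer and let α > 2/(d+1). For λ > 0 set u_λ = κ_d^{−1/(d+1)} λ^{1/(d+1)}. Then for every fixed h > 0, lim_{λ → ∞} φ_{λ,α,u_λ}(h) = 1. -/

import Mathlib

open MeasureTheory Real Filter

/-- `kappa j` is the Lebesgue volume of the unit ball in `ℝ^j`. -/
noncomputable def kappa (j : ℕ) : ℝ :=
  (volume (Metric.ball (0 : EuclideanSpace ℝ (Fin j)) 1)).toReal

/-- Normalized surface area `s₁` of a spherical cap of height `h` (equals `1` for `h > 2`). -/
noncomputable def s1 (d : ℕ) (h : ℝ) : ℝ :=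
  if h ≤ 2 then
    (((d : ℝ) - 1) * kappa (d - 1) / ((d : ℝ) * kappa d)) *
      ∫ θ in (0:ℝ)..(Real.arccos (1 - h)), (Real.sin θ) ^ (d - 2)
  else 1

/-- The function `g_{λ,α,u}(h)`. -/
noncomputable def gfun (lam al u h : ℝ) : ℝ :=
  min (max ((lam ^ al / u ^ 2 * h - (1 / 2) * (1 + lam ^ al) / u ^ 4 * h ^ 2) /
      (1 - h / u ^ 2)) 0) 2

/-- The density `φ_{λ,α,u}(h)`. -/
noncomputable def phi (d : ℕ) (lam al u h : ℝ) : ℝ :=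
  lam * (1 + lam ^ al) ^ d / u ^ (d + 1) / (kappa d * lam ^ ((d : ℝ) * al)) *
    s1 d (gfun lam al u h) * (1 - h / u ^ 2) ^ (d - 1)


/-!
Since `α > 2/(d+1)`, the ratio `λ^α / u_λ²` tends to infinity while `h / u_λ²` tends to `0`, so
`g_{λ,α,u_λ}(h)` is eventually clipped to `2`, where the cap is the whole sphere: `s₁(2) = 1`, by
the Gamma-function expressions for `∫₀^π sin^{d-2}` and for `κ_{d-1}`, `κ_d`. As
`κ_d u_λ^{d+1} = λ`, `φ` is then eventually `((1 + λ^α)/λ^α)^d (1 - h/u_λ²)^{d-1}`, which tends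
to `1`.
-/

lemma integral_sin_pow_eq_Gamma (n : ℕ) :
    ∫ x in (0:ℝ)..π, sin x ^ n = √π * Gamma ((n + 1) / 2) / Gamma (n / 2 + 1) := by
  induction n using Nat.twoStepInduction with
  | zero =>
    simp only [pow_zero, Nat.cast_zero]
    rw [intervalIntegral.integral_const]
    norm_num [Gamma_one]
    rw [Gamma_one_half_eq, mul_self_sqrt pi_pos.le]
  | one =>
    simp only [pow_one, Nat.cast_one]
    rw [integral_sin, one_add_one_eq_two, div_self two_ne_zero, Gamma_one,
      Gamma_add_one one_half_pos.ne', Gamma_one_half_eq]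
    have : √π ≠ 0 := (sqrt_pos.mpr pi_pos).ne'
    field_simp
    norm_num
  | more n ih _ =>
    have : 0 < Gamma ((n + 1) / 2) := Gamma_pos_of_pos (by positivity)
    have : 0 < Gamma (n / 2 + 1) := Gamma_pos_of_pos (by positivity)
    have hstep : √π * Gamma ((n + 2 + 1) / 2) / Gamma ((n + 2) / 2 + 1)
        = (n + 1) / (n + 2) * (√π * Gamma ((n + 1) / 2) / Gamma (n / 2 + 1)) := by
      rw [show ((n:ℝ) + 2 + 1) / 2 = (n + 1) / 2 + 1 by ring,
        show ((n:ℝ) + 2) / 2 + 1 = (n / 2 + 1) + 1 by ring,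
        Gamma_add_one (s := ((n:ℝ) + 1) / 2) (by positivity),
        Gamma_add_one (s := (n:ℝ) / 2 + 1) (by positivity)]
      field_simp
    rw [integral_sin_pow, ih]
    push_cast
    rw [hstep]
    simp

lemma kappa_eq_Gamma {j : ℕ} (hj : 0 < j) : kappa j = √π ^ j / Gamma (j / 2 + 1) := by
  have : Nonempty (Fin j) := ⟨⟨0, hj⟩⟩
  have : 0 < Gamma (j / 2 + 1) := Gamma_pos_of_pos (by positivity)
  rw [kappa, EuclideanSpace.volume_ball, Fintype.card_fin, ENNReal.ofReal_one, one_pow, one_mul,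
    ENNReal.toReal_ofReal (by positivity)]

lemma kappa_pos {j : ℕ} (hj : 0 < j) : 0 < kappa j := by
  have : 0 < Gamma (j / 2 + 1) := Gamma_pos_of_pos (by positivity)
  rw [kappa_eq_Gamma hj]
  positivity

lemma s1_two {d : ℕ} (hd : 2 ≤ d) : s1 d 2 = 1 := by
  obtain ⟨n, rfl⟩ : ∃ n, d = n + 2 := ⟨d - 2, by omega⟩
  rw [s1, if_pos le_rfl, show (1:ℝ) - 2 = -1 by norm_num, arccos_neg_one, Nat.add_sub_cancel,
    show n + 2 - 1 = n + 1 from rfl, integral_sin_pow_eq_Gamma, kappa_eq_Gamma n.succ_pos,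
    kappa_eq_Gamma (by omega : 0 < n + 2)]
  push_cast
  rw [show ((n:ℝ) + 1) / 2 + 1 = (n + 1) / 2 + 1 by ring,
    show ((n:ℝ) + 2) / 2 + 1 = (n / 2 + 1) + 1 by ring,
    Gamma_add_one (s := ((n:ℝ) + 1) / 2) (by positivity),
    Gamma_add_one (s := (n:ℝ) / 2 + 1) (by positivity), pow_succ √π (n + 1)]
  have : 0 < √π := sqrt_pos.mpr pi_pos
  have : 0 < Gamma ((n + 1) / 2) := Gamma_pos_of_pos (by positivity)
  have : 0 < Gamma (n / 2 + 1) := Gamma_pos_of_pos (by positivity)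
  field_simp
  ring

lemma phi_eq_of_gfun_eq_two {d : ℕ} (hd : 2 ≤ d) {lam al u h : ℝ} (hlam : 0 ≤ lam)
    (hg : gfun lam al u h = 2) :
    phi d lam al u h = lam / (kappa d * u ^ (d + 1)) * ((1 + lam ^ al) / lam ^ al) ^ d *
      (1 - h / u ^ 2) ^ (d - 1) := by
  rw [phi, hg, s1_two hd, mul_comm (d : ℝ), rpow_mul hlam, rpow_natCast, div_pow]
  ring

lemma eventually_gfun_eq_two {ι : Type*} {l : Filter ι} {lam u : ι → ℝ} {al h : ℝ} (hh : 0 < h)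
    (hA : Tendsto (fun i => lam i ^ al / u i ^ 2) l atTop)
    (hB : Tendsto (fun i => h / u i ^ 2) l (nhds 0)) :
    ∀ᶠ i in l, gfun (lam i) al (u i) h = 2 := by
  have hquot : Tendsto (fun i => (lam i ^ al / u i ^ 2 * h * (1 - h / u i ^ 2 / 2)
      - (h / u i ^ 2) ^ 2 / 2) * (1 - h / u i ^ 2)⁻¹) l atTop := by
    have hB_half : Tendsto (fun i => 1 - h / u i ^ 2 / 2) l (nhds 1) := by
      simpa using (hB.div_const 2).const_sub 1
    have hB_sq : Tendsto (fun i => -((h / u i ^ 2) ^ 2 / 2)) l (nhds 0) := by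
      simpa using ((hB.pow 2).div_const 2).neg
    have hB_inv : Tendsto (fun i => (1 - h / u i ^ 2)⁻¹) l (nhds 1) := by
      simpa using (hB.const_sub 1).inv₀ (by norm_num)
    simpa only [← sub_eq_add_neg] using
      (((hA.atTop_mul_const hh).atTop_mul_pos one_pos hB_half).atTop_add hB_sq).atTop_mul_pos
        one_pos hB_inv
  filter_upwards [hquot.eventually_ge_atTop 2] with i hi
  have hquot_eq : (lam i ^ al / u i ^ 2 * h - (1 / 2) * (1 + lam i ^ al) / u i ^ 4 * h ^ 2) /
      (1 - h / u i ^ 2) = (lam i ^ al / u i ^ 2 * h * (1 - h / u i ^ 2 / 2)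
      - (h / u i ^ 2) ^ 2 / 2) * (1 - h / u i ^ 2)⁻¹ := by
    ring
  rw [gfun, hquot_eq, max_eq_left (by linarith), min_eq_right hi]

lemma rpow_mul_rpow_pow {c x : ℝ} (hc : 0 ≤ c) (hx : 0 ≤ x) (a b : ℝ) (n : ℕ) :
    (c ^ a * x ^ b) ^ n = c ^ (a * n) * x ^ (b * n) := by
  rw [mul_pow, ← rpow_natCast, ← rpow_natCast (x ^ b), ← rpow_mul hc, ← rpow_mul hx]

noncomputable def uLambda (d : ℕ) (lam : ℝ) : ℝ :=
  kappa d ^ (-(1 : ℝ) / ((d : ℝ) + 1)) * lam ^ ((1 : ℝ) / ((d : ℝ) + 1))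

lemma kappa_mul_uLambda_pow_succ {d : ℕ} (hd : 0 < d) {lam : ℝ} (hlam : 0 ≤ lam) :
    kappa d * uLambda d lam ^ (d + 1) = lam := by
  have hκ := kappa_pos hd
  rw [uLambda, rpow_mul_rpow_pow hκ.le hlam]
  push_cast
  rw [div_mul_cancel₀ _ (by positivity), div_mul_cancel₀ _ (by positivity), rpow_neg_one,
    rpow_one, mul_inv_cancel_left₀ hκ.ne']

lemma tendsto_uLambda_atTop {d : ℕ} (hd : 0 < d) : Tendsto (uLambda d) atTop atTop :=
  (tendsto_rpow_atTop (by positivity)).const_mul_atTop (rpow_pos_of_pos (kappa_pos hd) _)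

lemma tendsto_rpow_div_uLambda_sq_atTop {d : ℕ} (hd : 0 < d) {al : ℝ}
    (hal : 2 / ((d : ℝ) + 1) < al) :
    Tendsto (fun lam => lam ^ al / uLambda d lam ^ 2) atTop atTop := by
  have hκ := kappa_pos hd
  refine ((tendsto_rpow_atTop (sub_pos.mpr hal)).const_mul_atTop
    (rpow_pos_of_pos hκ (2 / ((d : ℝ) + 1)))).congr' ?_
  filter_upwards [eventually_gt_atTop 0] with lam hlam
  have hsq : uLambda d lam ^ 2 = (kappa d ^ (2 / ((d : ℝ) + 1)))⁻¹ * lam ^ (2 / ((d : ℝ) + 1)) := by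
    rw [uLambda, rpow_mul_rpow_pow hκ.le hlam.le, ← rpow_neg hκ.le]
    congr 2 <;> push_cast <;> ring
  have := rpow_pos_of_pos hκ (2 / ((d : ℝ) + 1))
  rw [hsq, rpow_sub hlam]
  field_simp

lemma tendsto_one_add_rpow_div_rpow {al : ℝ} (hal : 0 < al) :
    Tendsto (fun lam : ℝ => (1 + lam ^ al) / lam ^ al) atTop (nhds 1) := by
  refine (by simpa using (tendsto_rpow_neg_atTop hal).const_add 1 :
    Tendsto (fun lam : ℝ => 1 + lam ^ (-al)) atTop (nhds 1)).congr' ?_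
  filter_upwards [eventually_gt_atTop 0] with lam hlam
  rw [rpow_neg hlam.le, add_div, div_self (rpow_pos_of_pos hlam al).ne', one_div, add_comm]

/-- for `α > 2/(d+1)` and `u_λ = κ_d^{-1/(d+1)} λ^{1/(d+1)}`,
`φ_{λ,α,u_λ}(h) → 1` for every fixed `h > 0`. -/
theorem phi_limit_supercritical (d : ℕ) (hd : 2 ≤ d) (al : ℝ)
    (hal : 2 / ((d : ℝ) + 1) < al) (h : ℝ) (hh : 0 < h) :
    Tendsto (fun lam : ℝ =>
        phi d lam al (kappa d ^ (-(1 : ℝ) / ((d : ℝ) + 1)) * lam ^ ((1 : ℝ) / ((d : ℝ) + 1))) h)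
      atTop (nhds 1) := by
  change Tendsto (fun lam => phi d lam al (uLambda d lam) h) atTop (nhds 1)
  have hd0 : 0 < d := by omega
  have hal0 : 0 < al := lt_trans (by positivity) hal
  have hB : Tendsto (fun lam => h / uLambda d lam ^ 2) atTop (nhds 0) :=
    tendsto_const_nhds.div_atTop ((tendsto_pow_atTop two_ne_zero).comp (tendsto_uLambda_atTop hd0))
  have hphi : (fun lam => phi d lam al (uLambda d lam) h) =ᶠ[atTop]
      fun lam => ((1 + lam ^ al) / lam ^ al) ^ d * (1 - h / uLambda d lam ^ 2) ^ (d - 1) := by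
    filter_upwards [eventually_gfun_eq_two hh (tendsto_rpow_div_uLambda_sq_atTop hd0 hal) hB,
      eventually_gt_atTop 0] with lam hg hlam
    rw [phi_eq_of_gfun_eq_two hd hlam.le hg, kappa_mul_uLambda_pow_succ hd0 hlam.le,
      div_self hlam.ne', one_mul]
  rw [tendsto_congr' hphi]
  simpa using ((tendsto_one_add_rpow_div_rpow hal0).pow d).mul ((hB.const_sub 1).pow (d - 1))
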